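/- Let ρ = |0⟩⟨0|_A ⊗ (1/2^b) I_B on a+b qubits, and partition the qubits into C and D with |D| = d > a. For any unitary U, if the register C of U ρ U† is measured in the computational basis, the probability that the post-measurement state on D equals a fixed pure state |ψ⟩⟨ψ|_D is at most 2^{a-d}. -/

import Mathlib

open Matrix BigOperators Kronecker
open scoped Classical ComplexOrder

noncomputable section

def ptraceFst {C D : Type*} [Fintype C] (σ : Matrix (C × D) (C × D) ℂ) :
    Matrix D D ℂ := Matrix.of fun y y' => ∑ j : C, σ (j, y) (j, y')

def ptraceSnd {C D : Type*} [Fintype D] (σ : Matrix (C × D) (C × D) ℂ) :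
    Matrix C C ℂ := Matrix.of fun x x' => ∑ j : D, σ (x, j) (x', j)

def traceNorm {n : Type*} [Fintype n] [DecidableEq n] (M : Matrix n n ℂ) : ℝ :=
  ((Matrix.posSemidef_conjTranspose_mul_self M).1.eigenvectorUnitary.1 *
    Matrix.diagonal (((↑) : ℝ → ℂ) ∘ (fun x : ℝ => √x) ∘ (Matrix.posSemidef_conjTranspose_mul_self M).1.eigenvalues) *
    (star (Matrix.posSemidef_conjTranspose_mul_self M).1.eigenvectorUnitary : Matrix n n ℂ)).trace.re

def traceDist {n : Type*} [Fintype n] [DecidableEq n] (σ σ' : Matrix n n ℂ) : ℝ :=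
  traceNorm (σ - σ') / 2

def IsDensity {n : Type*} [Fintype n] (M : Matrix n n ℂ) : Prop :=
  M.PosSemidef ∧ M.trace = 1

def IsPure {n : Type*} [Fintype n] (σ : Matrix n n ℂ) : Prop :=
  ∃ ψ : n → ℂ, (∑ i, Complex.normSq (ψ i)) = 1 ∧ σ = Matrix.vecMulVec ψ (star ψ)

def inputState (a b : ℕ) :
    Matrix (Fin (2^a) × Fin (2^b)) (Fin (2^a) × Fin (2^b)) ℂ :=
  (Matrix.single 0 0 1) ⊗ₖ (((2:ℂ)^b)⁻¹ • (1 : Matrix (Fin (2^b)) (Fin (2^b)) ℂ))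

def measSub {C D : Type*} [Fintype C] [Fintype D] (σ : Matrix (C × D) (C × D) ℂ) (j : C) :
    Matrix D D ℂ := Matrix.of fun y y' => σ (j, y) (j, y')

def measProb {C D : Type*} [Fintype C] [Fintype D] (σ : Matrix (C × D) (C × D) ℂ) (j : C) : ℝ :=
  ((measSub σ j).trace).re

def gibbs {n : Type*} [Fintype n] [DecidableEq n] (β : ℝ) {H : Matrix n n ℂ}
    (hH : H.IsHermitian) : Matrix n n ℂ :=
  ((hH.cfc (fun x => Real.exp (-β * x))).trace)⁻¹ • hH.cfc (fun x => Real.exp (-β * x))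

def vNEntropy {n : Type*} [Fintype n] [DecidableEq n] (M : Matrix n n ℂ) : ℝ :=
  if h : M.IsHermitian then -∑ i, (h.eigenvalues i) * Real.logb 2 (h.eigenvalues i) else 0

def iterState (n : ℕ) (U : ℕ → Matrix (Fin 2 × Fin (2^n)) (Fin 2 × Fin (2^n)) ℂ) :
    ℕ → Matrix (Fin (2^n)) (Fin (2^n)) ℂ
  | 0 => ((2:ℂ)^n)⁻¹ • 1
  | k+1 => ptraceFst (U k * ((Matrix.single 0 0 1) ⊗ₖ iterState n U k) * (U k)ᴴ)

/-! The input state satisfies `ρ ≤ 2^{-b} • 1` in the Loewner order, and such a scalar bound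
survives reindexing, unitary conjugation and restriction to the diagonal block of a measurement
outcome `j`. If that block is `p_j |ψ⟩⟨ψ|`, evaluating the quadratic form at `ψ` gives
`p_j ≤ 2^{-b}`; summing over the `2^c` outcomes bounds the success probability by
`2^{c-b} = 2^{a-d}`. -/

open scoped MatrixOrder

namespace Matrix

variable {𝕜 m n : Type*} [RCLike 𝕜]

lemma single_le_one [Fintype n] [DecidableEq n] (i : n) : single i i (1 : 𝕜) ≤ 1 := by
  rw [le_iff, ← diagonal_single, ← diagonal_one, diagonal_sub, posSemidef_diagonal_iff]
  intro k
  by_cases hk : k = i <;> simp [hk]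

lemma kronecker_le_kronecker_left [Fintype m] [Fintype n] {x x' : Matrix m m 𝕜}
    {y : Matrix n n 𝕜} (hx : x ≤ x') (hy : 0 ≤ y) : x ⊗ₖ y ≤ x' ⊗ₖ y := by
  rw [← add_sub_cancel x x', add_kronecker]
  exact le_add_of_nonneg_right ((le_iff.mp hx).kronecker hy.posSemidef).nonneg

lemma reindex_le_smul_one [Fintype m] [Fintype n] [DecidableEq m] [DecidableEq n]
    (e : m ≃ n) {A : Matrix m m 𝕜} {r : 𝕜} (h : A ≤ r • 1) : reindex e e A ≤ r • 1 := by
  rw [le_iff, reindex_apply, ← submatrix_one_equiv e.symm]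
  exact (le_iff.mp h).submatrix _

lemma submatrix_le_smul_one [Fintype m] [Fintype n] [DecidableEq m] [DecidableEq n]
    {f : m → n} (hf : Function.Injective f) {A : Matrix n n 𝕜} {r : 𝕜} (h : A ≤ r • 1) :
    A.submatrix f f ≤ r • 1 := by
  rw [le_iff, ← submatrix_one f hf]
  exact (le_iff.mp h).submatrix f

lemma mul_mul_conjTranspose_le_smul_one [Fintype n] [DecidableEq n] {A U : Matrix n n 𝕜}
    {r : 𝕜} (h : A ≤ r • 1) (hU : U ∈ unitaryGroup n 𝕜) : U * A * Uᴴ ≤ r • 1 := by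
  calc U * A * Uᴴ ≤ U * (r • 1) * star U := star_right_conjugate_le_conjugate h U
    _ = r • 1 := by simp [Unitary.mul_star_self_of_mem hU]

end Matrix

open Matrix

lemma inputState_le (a b : ℕ) : inputState a b ≤ ((((2:ℝ) ^ b)⁻¹ : ℝ) : ℂ) • 1 := by
  have hr : (0 : Matrix (Fin (2^b)) (Fin (2^b)) ℂ) ≤ ((2:ℂ)^b)⁻¹ • 1 :=
    (PosSemidef.one.smul (by positivity)).nonneg
  calc inputState a b ≤ 1 ⊗ₖ (((2:ℂ)^b)⁻¹ • (1 : Matrix (Fin (2^b)) (Fin (2^b)) ℂ)) :=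
        kronecker_le_kronecker_left (single_le_one 0) hr
    _ = _ := by push_cast; rw [kronecker_smul, one_kronecker_one]

lemma dotProduct_star_self_eq_one {n : Type*} [Fintype n] {ψ : n → ℂ}
    (hψ : ∑ i, Complex.normSq (ψ i) = 1) : star ψ ⬝ᵥ ψ = 1 := by
  simp only [dotProduct, Pi.star_apply, Complex.star_def, ← Complex.normSq_eq_conj_mul_self]
  exact_mod_cast hψ

lemma le_of_smul_vecMulVec_le_smul_one {n : Type*} [Fintype n] [DecidableEq n] {ψ : n → ℂ}
    (hψ : ∑ i, Complex.normSq (ψ i) = 1) {p r : ℝ}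
    (h : (p : ℂ) • vecMulVec ψ (star ψ) ≤ (r : ℂ) • 1) : p ≤ r := by
  have hquad := (le_iff.mp h).dotProduct_mulVec_nonneg ψ
  have hψ' := dotProduct_star_self_eq_one hψ
  rw [sub_mulVec, smul_mulVec, smul_mulVec, one_mulVec, vecMulVec_mulVec, hψ', dotProduct_sub,
    dotProduct_smul, dotProduct_smul] at hquad
  simpa [hψ'] using hquad

lemma measSub_le_smul_one {C D : Type*} [Fintype C] [Fintype D] [DecidableEq C] [DecidableEq D]
    {σ : Matrix (C × D) (C × D) ℂ} {r : ℂ} (hσ : σ ≤ r • 1) (j : C) : measSub σ j ≤ r • 1 :=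
  submatrix_le_smul_one (Prod.mk_right_injective j) hσ

lemma sum_measProb_of_measSub_eq_pure_le {C D : Type*} [Fintype C] [Fintype D] [DecidableEq C]
    [DecidableEq D] {σ : Matrix (C × D) (C × D) ℂ} {r : ℝ} (hr : 0 ≤ r) (hσ : σ ≤ (r : ℂ) • 1)
    {ψ : D → ℂ} (hψ : ∑ i, Complex.normSq (ψ i) = 1) :
    (∑ j : C, if measSub σ j = (measProb σ j : ℂ) • vecMulVec ψ (star ψ)
      then measProb σ j else 0) ≤ Fintype.card C * r := by
  calc _ ≤ ∑ _j : C, r := Finset.sum_le_sum fun j _ => by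
        split_ifs with hpure
        · exact le_of_smul_vecMulVec_le_smul_one hψ (hpure ▸ measSub_le_smul_one hσ j)
        · exact hr
    _ = _ := by simp

theorem stmt3_general (a b c d : ℕ) (hn : a + b = c + d)
    (e : (Fin (2^a) × Fin (2^b)) ≃ (Fin (2^c) × Fin (2^d)))
    (U : Matrix (Fin (2^c) × Fin (2^d)) (Fin (2^c) × Fin (2^d)) ℂ)
    (hU : U ∈ Matrix.unitaryGroup (Fin (2^c) × Fin (2^d)) ℂ)
    (ψ : Fin (2^d) → ℂ) (hψ : (∑ i, Complex.normSq (ψ i)) = 1) :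
    (∑ j : Fin (2^c),
        if measSub (U * (Matrix.reindex e e (inputState a b)) * Uᴴ) j
            = (measProb (U * (Matrix.reindex e e (inputState a b)) * Uᴴ) j : ℂ)
                • Matrix.vecMulVec ψ (star ψ)
          then measProb (U * (Matrix.reindex e e (inputState a b)) * Uᴴ) j else 0)
      ≤ (2:ℝ)^(a:ℤ) / (2:ℝ)^(d:ℤ) := by
  have hσ := mul_mul_conjTranspose_le_smul_one (reindex_le_smul_one e (inputState_le a b)) hU
  calc _ ≤ Fintype.card (Fin (2^c)) * ((2:ℝ)^b)⁻¹ :=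
        sum_measProb_of_measSub_eq_pure_le (by positivity) hσ hψ
    _ = (2:ℝ)^(a:ℤ) / (2:ℝ)^(d:ℤ) := by
        have hcd : (2:ℝ)^c * 2^d = 2^a * 2^b := by rw [← pow_add, ← pow_add, hn]
        rw [Fintype.card_fin, zpow_natCast, zpow_natCast]
        push_cast
        field_simp
        linear_combination hcd

theorem stmt3 (a b c d : ℕ) (hn : a + b = c + d) (hd : a < d)
    (e : (Fin (2^a) × Fin (2^b)) ≃ (Fin (2^c) × Fin (2^d)))
    (U : Matrix (Fin (2^c) × Fin (2^d)) (Fin (2^c) × Fin (2^d)) ℂ)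
    (hU : U ∈ Matrix.unitaryGroup (Fin (2^c) × Fin (2^d)) ℂ)
    (ψ : Fin (2^d) → ℂ) (hψ : (∑ i, Complex.normSq (ψ i)) = 1) :
    (∑ j : Fin (2^c),
        if measSub (U * (Matrix.reindex e e (inputState a b)) * Uᴴ) j
            = (measProb (U * (Matrix.reindex e e (inputState a b)) * Uᴴ) j : ℂ)
                • Matrix.vecMulVec ψ (star ψ)
          then measProb (U * (Matrix.reindex e e (inputState a b)) * Uᴴ) j else 0)
      ≤ (2:ℝ)^(a:ℤ) / (2:ℝ)^(d:ℤ) :=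
  stmt3_general a b c d hn e U hU ψ hψ
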